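/- arXiv:math/0211435 — 2 statements merged into one kernel-verified Lean document; each statement's English description precedes it below -/
import Mathlib

section
/- Let d ≥ 1 and let φ(x) = |x|^{-(d-1)/2} for x ∈ ℝ^d \ {0}. Let S_t denote the heat semigroup on ℝ^d with kernel P(t;x,y) = (4πt)^{-d/2} e^{-|y-x|²/(4t)}. Then there exists a constant C = C(d) such that S_t φ(x) ≤ C φ(x) for all t ≥ 0 and all x ≠ 0. -/
open Real MeasureTheory Metric Set
open scoped ENNReal RealInnerProductSpace

namespace Stmt2Aux


lemma integrableOn_ball_rpow (d : ℕ) (a : ℝ) (ha : 0 ≤ a) (had : a < d) :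
    IntegrableOn (fun y : EuclideanSpace ℝ (Fin d) => ‖y‖ ^ (-a))
      (ball (0 : EuclideanSpace ℝ (Fin d)) 1) volume := by
  rcases eq_or_lt_of_le ha with h0 | hapos
  · simp only [← h0, neg_zero, Real.rpow_zero]
    exact integrableOn_const measure_ball_lt_top.ne
  have hmeas : Measurable (fun y : EuclideanSpace ℝ (Fin d) => ‖y‖ ^ (-a)) :=
    by fun_prop
  constructor
  · exact hmeas.aestronglyMeasurable.restrict
  · have hnn : ∀ y : EuclideanSpace ℝ (Fin d), 0 ≤ ‖y‖ ^ (-a) :=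
      fun y => rpow_nonneg (norm_nonneg y) _
    have key : (∫⁻ y, ENNReal.ofReal (‖y‖ ^ (-a))
        ∂(volume.restrict (ball (0 : EuclideanSpace ℝ (Fin d)) 1))) < ∞ := by
      rw [lintegral_eq_lintegral_meas_le _ (ae_of_all _ hnn) hmeas.aemeasurable]
      set ν := volume.restrict (ball (0 : EuclideanSpace ℝ (Fin d)) 1) with hν
      have hboundIoi : ∀ t ∈ Ioi (1:ℝ),
          ν {y : EuclideanSpace ℝ (Fin d) | t ≤ ‖y‖ ^ (-a)} ≤
            ENNReal.ofReal (t ^ ((-a⁻¹) * d)) *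
              volume (ball (0 : EuclideanSpace ℝ (Fin d)) 1) := by
        intro t ht
        have ht0 : (0:ℝ) < t := lt_trans one_pos ht
        have hsub : {y : EuclideanSpace ℝ (Fin d) | t ≤ ‖y‖ ^ (-a)} ⊆
            closedBall (0 : EuclideanSpace ℝ (Fin d)) (t ^ (-a⁻¹)) := by
          intro y hy
          simp only [mem_setOf_eq] at hy
          have := rpow_le_rpow_of_nonpos ht0 hy (neg_nonpos.2 (inv_nonneg.2 ha))
          rw [← Real.rpow_mul (norm_nonneg y), neg_mul_neg, mul_inv_cancel₀ hapos.ne',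
            Real.rpow_one] at this
          simpa [mem_closedBall_zero_iff] using this
        calc ν {y : EuclideanSpace ℝ (Fin d) | t ≤ ‖y‖ ^ (-a)}
            ≤ volume (closedBall (0 : EuclideanSpace ℝ (Fin d)) (t ^ (-a⁻¹))) :=
              le_trans (Measure.restrict_le_self _) (measure_mono hsub)
          _ = ENNReal.ofReal ((t ^ (-a⁻¹)) ^ (Module.finrank ℝ (EuclideanSpace ℝ (Fin d)))) *
              volume (ball (0 : EuclideanSpace ℝ (Fin d)) 1) :=
              Measure.addHaar_closedBall _ _ (rpow_nonneg ht0.le _)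
          _ = ENNReal.ofReal (t ^ ((-a⁻¹) * d)) *
              volume (ball (0 : EuclideanSpace ℝ (Fin d)) 1) := by
              rw [finrank_euclideanSpace_fin, ← Real.rpow_natCast (t ^ (-a⁻¹)) d,
                ← Real.rpow_mul ht0.le]
      calc (∫⁻ t in Ioi (0:ℝ), ν {y | t ≤ ‖y‖ ^ (-a)})
          ≤ ∫⁻ t in Ioc (0:ℝ) 1 ∪ Ioi 1, ν {y | t ≤ ‖y‖ ^ (-a)} :=
            lintegral_mono_set Ioi_subset_Ioc_union_Ioi
        _ ≤ (∫⁻ t in Ioc (0:ℝ) 1, ν {y | t ≤ ‖y‖ ^ (-a)}) +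
            ∫⁻ t in Ioi (1:ℝ), ν {y | t ≤ ‖y‖ ^ (-a)} := lintegral_union_le _ _ _
        _ < ∞ := by
            refine ENNReal.add_lt_top.2 ⟨?_, ?_⟩
            · calc (∫⁻ t in Ioc (0:ℝ) 1, ν {y | t ≤ ‖y‖ ^ (-a)})
                  ≤ ∫⁻ _t in Ioc (0:ℝ) 1, volume (ball (0 : EuclideanSpace ℝ (Fin d)) 1) := by
                    refine setLIntegral_mono' measurableSet_Ioc fun t _ => ?_
                    rw [hν]
                    exact le_trans (measure_mono (subset_univ _))
                      (le_of_eq (Measure.restrict_apply_univ _))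
                _ = volume (ball (0 : EuclideanSpace ℝ (Fin d)) 1) * volume (Ioc (0:ℝ) 1) :=
                    setLIntegral_const _ _
                _ < ∞ := ENNReal.mul_lt_top measure_ball_lt_top measure_Ioc_lt_top
            · have hexp : (-a⁻¹) * d < -1 := by
                have h1 : (1:ℝ) < d / a := (one_lt_div hapos).2 had
                have : (-a⁻¹) * d = -(d / a) := by field_simp
                rw [this]
                linarith
              calc (∫⁻ t in Ioi (1:ℝ), ν {y | t ≤ ‖y‖ ^ (-a)})
                  ≤ ∫⁻ t in Ioi (1:ℝ), ENNReal.ofReal (t ^ ((-a⁻¹) * d)) *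
                      volume (ball (0 : EuclideanSpace ℝ (Fin d)) 1) :=
                    setLIntegral_mono' measurableSet_Ioi hboundIoi
                _ = (∫⁻ t in Ioi (1:ℝ), ENNReal.ofReal (t ^ ((-a⁻¹) * d))) *
                      volume (ball (0 : EuclideanSpace ℝ (Fin d)) 1) :=
                    lintegral_mul_const' _ _ measure_ball_lt_top.ne
                _ < ∞ := ENNReal.mul_lt_top
                      (integrableOn_Ioi_rpow_of_lt hexp one_pos).setLIntegral_lt_top
                      measure_ball_lt_top
    rw [HasFiniteIntegral]
    have : (∫⁻ y, (‖(‖y‖ ^ (-a))‖₊ : ℝ≥0∞)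
        ∂(volume.restrict (ball (0 : EuclideanSpace ℝ (Fin d)) 1))) =
        ∫⁻ y, ENNReal.ofReal (‖y‖ ^ (-a))
        ∂(volume.restrict (ball (0 : EuclideanSpace ℝ (Fin d)) 1)) :=
      lintegral_enorm_of_nonneg fun y => hnn y
    exact lt_of_eq_of_lt this key



lemma integrableOn_ball_rpow' (d : ℕ) (a : ℝ) (ha : 0 ≤ a) (had : a < d)
    (hbase : IntegrableOn (fun y : EuclideanSpace ℝ (Fin d) => ‖y‖ ^ (-a))
      (ball (0 : EuclideanSpace ℝ (Fin d)) 1) volume)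
    {R : ℝ} (hR : 0 < R) :
    IntegrableOn (fun y : EuclideanSpace ℝ (Fin d) => ‖y‖ ^ (-a))
      (ball (0 : EuclideanSpace ℝ (Fin d)) R) volume := by
  rw [← integrable_indicator_iff measurableSet_ball]
  refine (integrable_comp_smul_iff volume
    ((ball (0 : EuclideanSpace ℝ (Fin d)) R).indicator
      fun y => ‖y‖ ^ (-a)) hR.ne').1 ?_
  have heq : (fun x : EuclideanSpace ℝ (Fin d) =>
      ((ball (0 : EuclideanSpace ℝ (Fin d)) R).indicator (fun y => ‖y‖ ^ (-a))) (R • x)) =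
      (ball (0 : EuclideanSpace ℝ (Fin d)) 1).indicator
        (fun x => R ^ (-a) * ‖x‖ ^ (-a)) := by
    funext x
    have hmem : R • x ∈ ball (0 : EuclideanSpace ℝ (Fin d)) R ↔
        x ∈ ball (0 : EuclideanSpace ℝ (Fin d)) 1 := by
      simp only [mem_ball_zero_iff, norm_smul, Real.norm_eq_abs, abs_of_pos hR]
      constructor
      · intro h
        nlinarith [norm_nonneg x]
      · intro h
        nlinarith [norm_nonneg x]
    have hval : ‖R • x‖ ^ (-a) = R ^ (-a) * ‖x‖ ^ (-a) := by
      rw [norm_smul, Real.norm_eq_abs, abs_of_pos hR, Real.mul_rpow hR.le (norm_nonneg x)]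
    by_cases hx : x ∈ ball (0 : EuclideanSpace ℝ (Fin d)) 1
    · rw [indicator_of_mem (hmem.2 hx), indicator_of_mem hx, hval]
    · rw [indicator_of_notMem (fun h => hx (hmem.1 h)), indicator_of_notMem hx]
  rw [heq, integrable_indicator_iff measurableSet_ball]
  exact hbase.const_mul _

lemma integral_ball_rpow_smul (d : ℕ) (a : ℝ) {R : ℝ} (hR : 0 < R) :
    ∫ y in ball (0 : EuclideanSpace ℝ (Fin d)) R, ‖y‖ ^ (-a) =
      R ^ d * (R ^ (-a) * ∫ y in ball (0 : EuclideanSpace ℝ (Fin d)) 1, ‖y‖ ^ (-a)) := by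
  have h := Measure.setIntegral_comp_smul_of_pos volume
    (fun y : EuclideanSpace ℝ (Fin d) => ‖y‖ ^ (-a))
    (ball (0 : EuclideanSpace ℝ (Fin d)) 1) hR
  rw [smul_unitBall_of_pos hR, finrank_euclideanSpace_fin] at h
  have h2 : (∫ x in ball (0 : EuclideanSpace ℝ (Fin d)) 1, ‖R • x‖ ^ (-a)) =
      R ^ (-a) * ∫ y in ball (0 : EuclideanSpace ℝ (Fin d)) 1, ‖y‖ ^ (-a) := by
    rw [← integral_const_mul]
    refine setIntegral_congr_fun measurableSet_ball fun x _ => ?_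
    rw [norm_smul, Real.norm_eq_abs, abs_of_pos hR, Real.mul_rpow hR.le (norm_nonneg x)]
  rw [h2, smul_eq_mul] at h
  have hRd : (R : ℝ) ^ d ≠ 0 := pow_ne_zero _ hR.ne'
  field_simp at h ⊢
  linarith [h]

lemma scalar_bound (d : ℕ) {t ρ : ℝ} (ht : 0 < t) (hρ : 0 < ρ) :
    (4 * π * t) ^ (-(d : ℝ) / 2) * Real.exp (-ρ ^ 2 / (4 * t)) * ρ ^ d ≤
      1 + (Nat.factorial d : ℝ) := by
  set u : ℝ := ρ ^ 2 / (4 * t) with hu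
  have hu0 : 0 < u := by positivity
  have hbase : (0:ℝ) < 4 * π * t := by positivity
  have h1 : (4 * π * t) ^ (-(d : ℝ) / 2) * ρ ^ d = (u / π) ^ ((d : ℝ) / 2) := by
    have e1 : (u / π) = ρ ^ 2 / (4 * π * t) := by
      rw [hu]; field_simp
    rw [e1, Real.div_rpow (by positivity) hbase.le]
    have e2 : (ρ ^ 2 : ℝ) ^ ((d : ℝ) / 2) = ρ ^ d := by
      rw [← Real.rpow_natCast ρ 2, ← Real.rpow_mul hρ.le,
        show ((2:ℕ):ℝ) * ((d:ℝ)/2) = (d:ℝ) by push_cast; ring, Real.rpow_natCast]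
    rw [e2, neg_div, Real.rpow_neg hbase.le, div_eq_mul_inv]
    ring
  have h2 : (u / π) ^ ((d : ℝ) / 2) ≤ u ^ ((d : ℝ) / 2) := by
    refine Real.rpow_le_rpow (by positivity) ?_ (by positivity)
    exact div_le_self hu0.le (by linarith [pi_gt_three])
  have h3 : u ^ ((d : ℝ) / 2) ≤ 1 + u ^ d := by
    rcases le_total u 1 with h | h
    · have : u ^ ((d : ℝ) / 2) ≤ 1 := Real.rpow_le_one hu0.le h (by positivity)
      nlinarith [pow_nonneg hu0.le d]
    · have : u ^ ((d : ℝ) / 2) ≤ u ^ (d : ℝ) :=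
        Real.rpow_le_rpow_of_exponent_le h (by
          have : (0:ℝ) ≤ (d:ℝ) := Nat.cast_nonneg d
          linarith)
      rw [Real.rpow_natCast] at this
      linarith
  have h4 : Real.exp (-u) * (1 + u ^ d) ≤ 1 + (Nat.factorial d : ℝ) := by
    have e1 : Real.exp (-u) ≤ 1 := by
      rw [Real.exp_le_one_iff]; linarith
    have e2 : u ^ d ≤ (Nat.factorial d : ℝ) * Real.exp u := by
      have := Real.pow_div_factorial_le_exp u hu0.le d
      have hfac : (0:ℝ) < (Nat.factorial d : ℝ) := by positivity
      rw [div_le_iff₀ hfac] at this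
      linarith [this]
    have e3 : Real.exp (-u) * Real.exp u = 1 := by
      rw [← Real.exp_add]; simp
    calc Real.exp (-u) * (1 + u ^ d)
        = Real.exp (-u) + Real.exp (-u) * u ^ d := by ring
      _ ≤ 1 + Real.exp (-u) * ((Nat.factorial d : ℝ) * Real.exp u) := by
          have := mul_le_mul_of_nonneg_left e2 (Real.exp_pos (-u)).le
          linarith
      _ = 1 + (Nat.factorial d : ℝ) * (Real.exp (-u) * Real.exp u) := by ring
      _ = 1 + (Nat.factorial d : ℝ) := by rw [e3, mul_one]
  have hexpeq : -ρ ^ 2 / (4 * t) = -u := by rw [hu]; ring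
  calc (4 * π * t) ^ (-(d : ℝ) / 2) * Real.exp (-ρ ^ 2 / (4 * t)) * ρ ^ d
      = Real.exp (-u) * ((4 * π * t) ^ (-(d : ℝ) / 2) * ρ ^ d) := by rw [hexpeq]; ring
    _ = Real.exp (-u) * (u / π) ^ ((d : ℝ) / 2) := by rw [h1]
    _ ≤ Real.exp (-u) * (1 + u ^ d) := by
        have := le_trans h2 h3
        exact mul_le_mul_of_nonneg_left this (Real.exp_pos _).le
    _ ≤ 1 + (Nat.factorial d : ℝ) := h4



lemma integrable_gauss (d : ℕ) {b : ℝ} (hb : 0 < b) :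
    Integrable (fun v : EuclideanSpace ℝ (Fin d) => Real.exp (-b * ‖v‖ ^ 2)) := by
  have h := (GaussianFourier.integrable_cexp_neg_mul_sq_norm_add
    (V := EuclideanSpace ℝ (Fin d)) (b := (b : ℂ)) (by simpa using hb) 0 0).norm
  refine h.congr (Filter.Eventually.of_forall fun v => ?_)
  simp only []
  rw [Complex.norm_exp]
  congr 1
  have : (-(b:ℂ) * (‖v‖:ℂ) ^ 2 + 0 * (⟪(0 : EuclideanSpace ℝ (Fin d)), v⟫ : ℂ)) =
      ((-b * ‖v‖ ^ 2 : ℝ) : ℂ) := by push_cast; ring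
  rw [this, Complex.ofReal_re]

lemma integrable_gauss_shift (d : ℕ) {b : ℝ} (hb : 0 < b) (x : EuclideanSpace ℝ (Fin d)) :
    Integrable (fun y : EuclideanSpace ℝ (Fin d) => Real.exp (-b * ‖y - x‖ ^ 2)) :=
  (integrable_gauss d hb).comp_sub_right x

lemma integral_gauss_shift (d : ℕ) {b : ℝ} (hb : 0 < b) (x : EuclideanSpace ℝ (Fin d)) :
    ∫ y : EuclideanSpace ℝ (Fin d), Real.exp (-b * ‖y - x‖ ^ 2) =
      (π / b) ^ ((d : ℝ) / 2) := by
  rw [integral_sub_right_eq_self (fun v : EuclideanSpace ℝ (Fin d) =>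
    Real.exp (-b * ‖v‖ ^ 2)) x]
  rw [GaussianFourier.integral_rexp_neg_mul_sq_norm hb, finrank_euclideanSpace_fin]

end Stmt2Aux


open Stmt2Aux

set_option maxHeartbeats 1000000 in
theorem stmt2 (d : ℕ) (hd : 1 ≤ d) :
    ∃ C : ℝ, ∀ t : ℝ, 0 ≤ t → ∀ x : EuclideanSpace ℝ (Fin d), x ≠ 0 →
      (∫ y : EuclideanSpace ℝ (Fin d),
          (4 * π * t) ^ (-(d : ℝ) / 2) * Real.exp (-‖y - x‖ ^ 2 / (4 * t)) *
            ‖y‖ ^ (-((d : ℝ) - 1) / 2))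
        ≤ C * ‖x‖ ^ (-((d : ℝ) - 1) / 2) := by
  have hd1 : (1 : ℝ) ≤ (d : ℝ) := by exact_mod_cast hd
  set a : ℝ := ((d : ℝ) - 1) / 2 with ha_def
  have ha0 : 0 ≤ a := by unfold a; linarith
  have had : a < d := by unfold a; linarith
  have hexp_eq : -((d : ℝ) - 1) / 2 = -a := by rw [ha_def, neg_div]
  set κ : ℝ := ∫ y in ball (0 : EuclideanSpace ℝ (Fin d)) 1, ‖y‖ ^ (-a) with hκ_def
  have hκ0 : 0 ≤ κ := by
    refine setIntegral_nonneg measurableSet_ball fun y _ => ?_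
    exact rpow_nonneg (norm_nonneg y) _
  set C : ℝ := 2 ^ a + (1 + (Nat.factorial d : ℝ)) * (2 ^ a) * κ with hC_def
  have hC0 : 0 ≤ C := by
    have h2a : (0:ℝ) ≤ 2 ^ a := rpow_nonneg (by norm_num) _
    have hfac : (0:ℝ) ≤ (Nat.factorial d : ℝ) := Nat.cast_nonneg _
    have : 0 ≤ (1 + (Nat.factorial d : ℝ)) * (2 ^ a) * κ := by positivity
    linarith
  refine ⟨C, fun t ht x hx => ?_⟩
  simp only [hexp_eq]
  rcases eq_or_lt_of_le ht with h0 | htpos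
  · -- t = 0 : the integrand vanishes
    have : ∀ y : EuclideanSpace ℝ (Fin d),
        (4 * π * t) ^ (-(d : ℝ) / 2) * Real.exp (-‖y - x‖ ^ 2 / (4 * t)) *
          ‖y‖ ^ (-a) = 0 := by
      intro y
      rw [← h0]
      have : ((4 : ℝ) * π * 0) = 0 := by ring
      rw [this, Real.zero_rpow (by
        have h1 : (0:ℝ) < (d : ℝ) := by exact_mod_cast hd
        have : -(d : ℝ) / 2 < 0 := by linarith
        exact ne_of_lt this)]
      ring
    simp only [this, integral_zero]
    exact mul_nonneg hC0 (rpow_nonneg (norm_pos_iff.2 hx).le _)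
  · -- main case t > 0
    have hr : 0 < ‖x‖ := norm_pos_iff.2 hx
    have hρ : 0 < ‖x‖ / 2 := by linarith
    set c : ℝ := (4 * π * t) ^ (-(d : ℝ) / 2) with hc_def
    have hc0 : 0 ≤ c := rpow_nonneg (by positivity) _
    have hb : 0 < (4 * t)⁻¹ := by positivity
    have hexp_form : ∀ v : EuclideanSpace ℝ (Fin d),
        -‖v‖ ^ 2 / (4 * t) = -(4 * t)⁻¹ * ‖v‖ ^ 2 := fun v => by
      field_simp
    -- notation
    set r : ℝ := ‖x‖ with hr_def
    have hrpow2a : ((r / 2) : ℝ) ^ (-a) = 2 ^ a * r ^ (-a) := by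
      rw [Real.div_rpow hr.le (by norm_num : (0:ℝ) ≤ 2),
        Real.rpow_neg (by norm_num : (0:ℝ) ≤ 2), div_eq_mul_inv, inv_inv]
      ring
    -- the majorant
    set g : EuclideanSpace ℝ (Fin d) → ℝ := fun y =>
      c * (2 ^ a * r ^ (-a)) * Real.exp (-‖y - x‖ ^ 2 / (4 * t)) +
        (ball (0 : EuclideanSpace ℝ (Fin d)) (r / 2)).indicator
          (fun y => (c * Real.exp (-(r / 2) ^ 2 / (4 * t))) * ‖y‖ ^ (-a)) y with hg_def
    have int_gauss : Integrable
        (fun y : EuclideanSpace ℝ (Fin d) => Real.exp (-‖y - x‖ ^ 2 / (4 * t))) := by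
      have := integrable_gauss_shift d hb x
      refine this.congr (Filter.Eventually.of_forall fun y => ?_)
      show Real.exp (-(4 * t)⁻¹ * ‖y - x‖ ^ 2) = Real.exp (-‖y - x‖ ^ 2 / (4 * t))
      rw [hexp_form]
    have int_g1 : Integrable (fun y : EuclideanSpace ℝ (Fin d) =>
        c * (2 ^ a * r ^ (-a)) * Real.exp (-‖y - x‖ ^ 2 / (4 * t))) :=
      int_gauss.const_mul _
    have int_ball : IntegrableOn (fun y : EuclideanSpace ℝ (Fin d) => ‖y‖ ^ (-a))
        (ball (0 : EuclideanSpace ℝ (Fin d)) (r / 2)) volume :=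
      integrableOn_ball_rpow' d a ha0 had (integrableOn_ball_rpow d a ha0 had) hρ
    have int_g2 : Integrable ((ball (0 : EuclideanSpace ℝ (Fin d)) (r / 2)).indicator
        (fun y => (c * Real.exp (-(r / 2) ^ 2 / (4 * t))) * ‖y‖ ^ (-a))) :=
      (integrable_indicator_iff measurableSet_ball).2 (int_ball.const_mul _)
    have hf0 : ∀ y : EuclideanSpace ℝ (Fin d),
        0 ≤ c * Real.exp (-‖y - x‖ ^ 2 / (4 * t)) * ‖y‖ ^ (-a) := fun y => by
      have := rpow_nonneg (norm_nonneg y) (-a)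
      positivity
    have hfg : ∀ y : EuclideanSpace ℝ (Fin d),
        c * Real.exp (-‖y - x‖ ^ 2 / (4 * t)) * ‖y‖ ^ (-a) ≤ g y := by
      intro y
      show c * Real.exp (-‖y - x‖ ^ 2 / (4 * t)) * ‖y‖ ^ (-a) ≤
        c * (2 ^ a * r ^ (-a)) * Real.exp (-‖y - x‖ ^ 2 / (4 * t)) +
          (ball (0 : EuclideanSpace ℝ (Fin d)) (r / 2)).indicator
            (fun y => (c * Real.exp (-(r / 2) ^ 2 / (4 * t))) * ‖y‖ ^ (-a)) y
      by_cases hy : y ∈ ball (0 : EuclideanSpace ℝ (Fin d)) (r / 2)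
      · rw [indicator_of_mem hy]
        have hylt : ‖y‖ < r / 2 := by rwa [mem_ball_zero_iff] at hy
        have h1 : r / 2 ≤ ‖y - x‖ := by
          have h2 := norm_sub_norm_le x y
          rw [norm_sub_rev x y] at h2
          linarith
        have h2 : Real.exp (-‖y - x‖ ^ 2 / (4 * t)) ≤
            Real.exp (-(r / 2) ^ 2 / (4 * t)) := by
          apply Real.exp_le_exp.2
          have hsq : (r / 2) ^ 2 ≤ ‖y - x‖ ^ 2 := by nlinarith [norm_nonneg (y - x)]
          have h4t : (0:ℝ) < 4 * t := by linarith
          exact (div_le_div_iff_of_pos_right h4t).2 (neg_le_neg hsq)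
        have hmain : c * Real.exp (-‖y - x‖ ^ 2 / (4 * t)) * ‖y‖ ^ (-a) ≤
            c * Real.exp (-(r / 2) ^ 2 / (4 * t)) * ‖y‖ ^ (-a) := by
          apply mul_le_mul_of_nonneg_right _ (rpow_nonneg (norm_nonneg y) _)
          exact mul_le_mul_of_nonneg_left h2 hc0
        have hpos1 : 0 ≤ c * (2 ^ a * r ^ (-a)) * Real.exp (-‖y - x‖ ^ 2 / (4 * t)) := by
          have h2a : (0:ℝ) ≤ 2 ^ a := rpow_nonneg (by norm_num) _
          have hra : (0:ℝ) ≤ r ^ (-a) := rpow_nonneg hr.le _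
          positivity
        linarith
      · rw [indicator_of_notMem hy]
        have hyge : r / 2 ≤ ‖y‖ := by
          rw [mem_ball_zero_iff] at hy
          linarith [not_lt.1 hy]
        have h5 : ‖y‖ ^ (-a) ≤ (r / 2) ^ (-a) :=
          Real.rpow_le_rpow_of_nonpos hρ hyge (neg_nonpos.2 ha0)
        rw [hrpow2a] at h5
        have : c * Real.exp (-‖y - x‖ ^ 2 / (4 * t)) * ‖y‖ ^ (-a) ≤
            c * Real.exp (-‖y - x‖ ^ 2 / (4 * t)) * (2 ^ a * r ^ (-a)) := by
          apply mul_le_mul_of_nonneg_left h5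
          positivity
        calc c * Real.exp (-‖y - x‖ ^ 2 / (4 * t)) * ‖y‖ ^ (-a)
            ≤ c * Real.exp (-‖y - x‖ ^ 2 / (4 * t)) * (2 ^ a * r ^ (-a)) := this
          _ = c * (2 ^ a * r ^ (-a)) * Real.exp (-‖y - x‖ ^ 2 / (4 * t)) + 0 := by ring
    have step1 : (∫ y : EuclideanSpace ℝ (Fin d),
        c * Real.exp (-‖y - x‖ ^ 2 / (4 * t)) * ‖y‖ ^ (-a)) ≤ ∫ y, g y :=
      integral_mono_of_nonneg (Filter.Eventually.of_forall hf0) (int_g1.add int_g2)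
        (Filter.Eventually.of_forall hfg)
    have step2 : (∫ y, g y) =
        (∫ y : EuclideanSpace ℝ (Fin d),
          c * (2 ^ a * r ^ (-a)) * Real.exp (-‖y - x‖ ^ 2 / (4 * t))) +
        ∫ y : EuclideanSpace ℝ (Fin d),
          ((ball (0 : EuclideanSpace ℝ (Fin d)) (r / 2)).indicator
            (fun y => (c * Real.exp (-(r / 2) ^ 2 / (4 * t))) * ‖y‖ ^ (-a))) y :=
      integral_add int_g1 int_g2
    have hgauss_val : (∫ y : EuclideanSpace ℝ (Fin d),
        Real.exp (-‖y - x‖ ^ 2 / (4 * t))) = (π * (4 * t)) ^ ((d : ℝ) / 2) := by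
      have : (∫ y : EuclideanSpace ℝ (Fin d), Real.exp (-‖y - x‖ ^ 2 / (4 * t))) =
          ∫ y : EuclideanSpace ℝ (Fin d), Real.exp (-(4 * t)⁻¹ * ‖y - x‖ ^ 2) := by
        congr 1; funext y; rw [hexp_form]
      rw [this, integral_gauss_shift d hb x]
      congr 1
      field_simp
    have hpart1 : (∫ y : EuclideanSpace ℝ (Fin d),
        c * (2 ^ a * r ^ (-a)) * Real.exp (-‖y - x‖ ^ 2 / (4 * t))) =
        2 ^ a * r ^ (-a) := by
      rw [integral_const_mul, hgauss_val, hc_def]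
      have hpm : π * (4 * t) = 4 * π * t := by ring
      have key : (4 * π * t) ^ (-(d:ℝ) / 2) * (4 * π * t) ^ ((d:ℝ) / 2) = 1 := by
        rw [← Real.rpow_add (by positivity : (0:ℝ) < 4 * π * t), neg_div, neg_add_cancel,
          Real.rpow_zero]
      calc (4 * π * t) ^ (-(d:ℝ) / 2) * (2 ^ a * r ^ (-a)) * (π * (4 * t)) ^ ((d:ℝ) / 2)
          = (2 ^ a * r ^ (-a)) *
            ((4 * π * t) ^ (-(d:ℝ) / 2) * (4 * π * t) ^ ((d:ℝ) / 2)) := by rw [hpm]; ring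
        _ = 2 ^ a * r ^ (-a) := by rw [key, mul_one]
    have hpart2 : (∫ y : EuclideanSpace ℝ (Fin d),
        ((ball (0 : EuclideanSpace ℝ (Fin d)) (r / 2)).indicator
          (fun y => (c * Real.exp (-(r / 2) ^ 2 / (4 * t))) * ‖y‖ ^ (-a))) y) ≤
        (1 + (Nat.factorial d : ℝ)) * (2 ^ a) * κ * r ^ (-a) := by
      rw [integral_indicator measurableSet_ball, integral_const_mul,
        integral_ball_rpow_smul d a hρ, ← hκ_def]
      have hsb := scalar_bound d htpos hρ
      have hfac : (0:ℝ) ≤ 1 + (Nat.factorial d : ℝ) := by positivity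
      have h2a : (0:ℝ) ≤ (2:ℝ) ^ a := rpow_nonneg (by norm_num) _
      have hra : (0:ℝ) ≤ r ^ (-a) := rpow_nonneg hr.le _
      have hρa : (0:ℝ) ≤ ((r/2):ℝ) ^ (-a) := rpow_nonneg hρ.le _
      calc c * Real.exp (-(r / 2) ^ 2 / (4 * t)) *
            ((r / 2) ^ d * ((r / 2) ^ (-a) * κ)) =
            (c * Real.exp (-(r / 2) ^ 2 / (4 * t)) * (r / 2) ^ d) *
              ((r / 2) ^ (-a) * κ) := by ring
        _ ≤ (1 + (Nat.factorial d : ℝ)) * ((r / 2) ^ (-a) * κ) := by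
            apply mul_le_mul_of_nonneg_right hsb (mul_nonneg hρa hκ0)
        _ = (1 + (Nat.factorial d : ℝ)) * (2 ^ a) * κ * r ^ (-a) := by
            rw [hrpow2a]; ring
    calc (∫ y : EuclideanSpace ℝ (Fin d),
          c * Real.exp (-‖y - x‖ ^ 2 / (4 * t)) * ‖y‖ ^ (-a)) ≤ ∫ y, g y := step1
      _ = _ + _ := step2
      _ ≤ 2 ^ a * r ^ (-a) + (1 + (Nat.factorial d : ℝ)) * (2 ^ a) * κ * r ^ (-a) := by
          rw [hpart1]; exact add_le_add_right hpart2 _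
      _ = C * r ^ (-a) := by rw [hC_def]; ring
end

section
/- Let d = 3, α ∈ ℝ, and define P^α(t;x,y) := P(t;x,y) + (2t/(|x||y|))·P(t; |x|+|y|) − (8πα t/(|x||y|)) ∫₀^∞ e^{−4παu} P(t; u+|x|+|y|) du, where P(t;r) := (4πt)^{−3/2} e^{−r²/(4t)} and P(t;x,y) is the 3-dimensional Gaussian heat kernel. Then P^α(t;x,y) is (pointwise in t > 0, x, y ≠ 0) decreasing in α, and for α ≥ 0 one has P(t;x,y) ≤ P^α(t;x,y) ≤ P^0(t;x,y). -/
open Real MeasureTheory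

/-- The radial Gaussian `P(t; r) = (4πt)^{-3/2} e^{-r²/(4t)}`. -/
noncomputable def heatRadial (t r : ℝ) : ℝ :=
  (4 * π * t) ^ (-(3 : ℝ) / 2) * Real.exp (-r ^ 2 / (4 * t))

/-- The 3-dimensional Gaussian heat kernel. -/
noncomputable def heatKernel3 (t : ℝ) (x y : EuclideanSpace ℝ (Fin 3)) : ℝ :=
  (4 * π * t) ^ (-(3 : ℝ) / 2) * Real.exp (-‖x - y‖ ^ 2 / (4 * t))

/-- The fundamental solution `P^α` of the heat equation with one-point potential in `ℝ³`. -/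
noncomputable def Palpha (α t : ℝ) (x y : EuclideanSpace ℝ (Fin 3)) : ℝ :=
  heatKernel3 t x y + (2 * t / (‖x‖ * ‖y‖)) * heatRadial t (‖x‖ + ‖y‖) -
    (8 * π * α * t / (‖x‖ * ‖y‖)) *
      ∫ u in Set.Ioi (0 : ℝ), Real.exp (-4 * π * α * u) * heatRadial t (u + ‖x‖ + ‖y‖)

namespace Stmt18Aux

open Filter

variable {t s b : ℝ}

lemma exp_eq (ht : 0 < t) (s b u : ℝ) :
    Real.exp (-(b*u)) * Real.exp (-(u+s)^2/(4*t)) =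
      Real.exp (((s+2*b*t)^2 - s^2)/(4*t)) *
        Real.exp (-(1/(4*t)) * (u+(s+2*b*t))^2) := by
  rw [← Real.exp_add, ← Real.exp_add]
  congr 1
  field_simp
  ring

lemma int1 (ht : 0 < t) (s b : ℝ) :
    Integrable (fun u : ℝ => Real.exp (-(b*u)) * Real.exp (-(u+s)^2/(4*t))) := by
  have h : (0:ℝ) < 1/(4*t) := by positivity
  have heq : (fun u : ℝ => Real.exp (-(b*u)) * Real.exp (-(u+s)^2/(4*t))) =
      fun u : ℝ => Real.exp (((s+2*b*t)^2 - s^2)/(4*t)) *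
        Real.exp (-(1/(4*t)) * (u+(s+2*b*t))^2) := funext (exp_eq ht s b)
  rw [heq]
  exact ((integrable_exp_neg_mul_sq h).comp_add_right (s+2*b*t)).const_mul _

lemma int2 (ht : 0 < t) (s b : ℝ) :
    Integrable (fun u : ℝ =>
      Real.exp (-(b*u)) * ((u+s)/(2*t)) * Real.exp (-(u+s)^2/(4*t))) := by
  have h : (0:ℝ) < 1/(4*t) := by positivity
  have h1 := (integrable_mul_exp_neg_mul_sq h).comp_add_right (s+2*b*t)
  have h2 := ((integrable_exp_neg_mul_sq h).comp_add_right (s+2*b*t)).const_mul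
    (s - (s+2*b*t))
  have h3 := (h1.add h2).const_mul (Real.exp (((s+2*b*t)^2 - s^2)/(4*t)) / (2*t))
  refine h3.congr (Filter.Eventually.of_forall fun u => ?_)
  have key := exp_eq ht s b u
  calc Real.exp (((s+2*b*t)^2 - s^2)/(4*t)) / (2*t) *
        ((u+(s+2*b*t)) * Real.exp (-(1/(4*t)) * (u+(s+2*b*t))^2) +
          (s - (s+2*b*t)) * Real.exp (-(1/(4*t)) * (u+(s+2*b*t))^2))
      = ((u+s)/(2*t)) * (Real.exp (((s+2*b*t)^2 - s^2)/(4*t)) *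
          Real.exp (-(1/(4*t)) * (u+(s+2*b*t))^2)) := by ring
    _ = ((u+s)/(2*t)) * (Real.exp (-(b*u)) * Real.exp (-(u+s)^2/(4*t))) := by rw [← key]
    _ = Real.exp (-(b*u)) * ((u+s)/(2*t)) * Real.exp (-(u+s)^2/(4*t)) := by ring

lemma ibp (ht : 0 < t) (s b : ℝ) :
    b * ∫ u in Set.Ioi (0:ℝ), Real.exp (-(b*u)) * Real.exp (-(u+s)^2/(4*t)) =
      Real.exp (-s^2/(4*t)) -
        ∫ u in Set.Ioi (0:ℝ),
          Real.exp (-(b*u)) * ((u+s)/(2*t)) * Real.exp (-(u+s)^2/(4*t)) := by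
  have h1 := int1 ht s b
  have h2 := int2 ht s b
  set f : ℝ → ℝ := fun u => -(Real.exp (-(b*u)) * Real.exp (-(u+s)^2/(4*t))) with hf
  set F : ℝ → ℝ := fun u =>
    b * (Real.exp (-(b*u)) * Real.exp (-(u+s)^2/(4*t))) +
      Real.exp (-(b*u)) * ((u+s)/(2*t)) * Real.exp (-(u+s)^2/(4*t)) with hF
  have hderiv : ∀ u ∈ Set.Ioi (0:ℝ), HasDerivAt f (F u) u := by
    intro u _
    have d1 : HasDerivAt (fun u : ℝ => Real.exp (-(b*u))) (Real.exp (-(b*u)) * (-b)) u := by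
      have hd : HasDerivAt (fun u : ℝ => -(b*u)) (-b) u := by
        simpa [Pi.neg_def] using ((hasDerivAt_id u).const_mul b).neg
      exact hd.exp
    have d2 : HasDerivAt (fun u : ℝ => Real.exp (-(u+s)^2/(4*t)))
        (Real.exp (-(u+s)^2/(4*t)) * (-(2*(u+s))/(4*t))) u := by
      have h0 : HasDerivAt (fun u : ℝ => (u+s)^2) (2*(u+s)) u := by
        simpa [Pi.pow_def] using ((hasDerivAt_id u).add_const s).pow 2
      have hd : HasDerivAt (fun u : ℝ => -(u+s)^2/(4*t)) (-(2*(u+s))/(4*t)) u := by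
        simpa using (h0.neg.div_const (4*t))
      exact hd.exp
    have hm : HasDerivAt f (-(Real.exp (-(b*u)) * (-b) * Real.exp (-(u+s)^2/(4*t)) +
        Real.exp (-(b*u)) * (Real.exp (-(u+s)^2/(4*t)) * (-(2*(u+s))/(4*t))))) u :=
      (d1.mul d2).neg
    convert hm using 1
    simp only [hF]
    field_simp
    ring
  have heqf : f = fun u : ℝ => -(Real.exp (((s+2*b*t)^2 - s^2)/(4*t)) *
      Real.exp (-(1/(4*t)) * (u+(s+2*b*t))^2)) := by
    funext u
    simp only [hf]
    rw [exp_eq ht s b u]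
  have htend : Tendsto f atTop (nhds 0) := by
    rw [heqf]
    have h4 : Tendsto (fun u : ℝ => -(1/(4*t)) * (u+(s+2*b*t))^2) atTop atBot := by
      refine (tendsto_const_mul_atBot_of_neg (by simp only [neg_neg_iff_pos, neg_lt_zero]; positivity : -(1/(4*t)) < 0)).mpr ?_
      exact (tendsto_pow_atTop two_ne_zero).comp
        (tendsto_atTop_add_const_right atTop _ tendsto_id)
    have h5 := Real.tendsto_exp_atBot.comp h4
    have h6 := (h5.const_mul (Real.exp (((s+2*b*t)^2 - s^2)/(4*t)))).neg
    simpa using h6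
  have hcont : ContinuousWithinAt f (Set.Ici (0:ℝ)) 0 := by
    have : Continuous f := by rw [hf]; fun_prop
    exact this.continuousWithinAt
  have hint : IntegrableOn F (Set.Ioi (0:ℝ)) := ((h1.const_mul b).add h2).integrableOn
  have key := MeasureTheory.integral_Ioi_of_hasDerivAt_of_tendsto hcont hderiv hint htend
  rw [hF] at key
  rw [MeasureTheory.integral_add ((h1.const_mul b).integrableOn) h2.integrableOn,
    MeasureTheory.integral_const_mul] at key
  have hf0 : f 0 = -Real.exp (-s^2/(4*t)) := by simp [hf]
  rw [hf0] at key
  linarith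

lemma H_mono (ht : 0 < t) (hs : 0 ≤ s) {b₁ b₂ : ℝ} (hb : b₁ ≤ b₂) :
    (∫ u in Set.Ioi (0:ℝ),
        Real.exp (-(b₂*u)) * ((u+s)/(2*t)) * Real.exp (-(u+s)^2/(4*t))) ≤
      ∫ u in Set.Ioi (0:ℝ),
        Real.exp (-(b₁*u)) * ((u+s)/(2*t)) * Real.exp (-(u+s)^2/(4*t)) := by
  refine MeasureTheory.setIntegral_mono_on (int2 ht s b₂).integrableOn
    (int2 ht s b₁).integrableOn measurableSet_Ioi ?_
  intro u hu
  have hu0 : (0:ℝ) < u := hu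
  have h1 : Real.exp (-(b₂*u)) ≤ Real.exp (-(b₁*u)) :=
    Real.exp_le_exp.mpr (by nlinarith)
  have h3 : 0 ≤ (u+s)/(2*t) := div_nonneg (by linarith) (by linarith)
  exact mul_le_mul_of_nonneg_right (mul_le_mul_of_nonneg_right h1 h3) (Real.exp_nonneg _)

lemma H_nonneg (ht : 0 < t) (hs : 0 ≤ s) (b : ℝ) :
    0 ≤ ∫ u in Set.Ioi (0:ℝ),
        Real.exp (-(b*u)) * ((u+s)/(2*t)) * Real.exp (-(u+s)^2/(4*t)) := by
  refine MeasureTheory.setIntegral_nonneg measurableSet_Ioi fun u hu => ?_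
  have hu0 : (0:ℝ) < u := hu
  have h3 : 0 ≤ (u+s)/(2*t) := div_nonneg (by linarith) (by linarith)
  exact mul_nonneg (mul_nonneg (Real.exp_nonneg _) h3) (Real.exp_nonneg _)

end Stmt18Aux

theorem stmt18 (t : ℝ) (ht : 0 < t) (x y : EuclideanSpace ℝ (Fin 3))
    (hx : x ≠ 0) (hy : y ≠ 0) :
    (∀ α₁ α₂ : ℝ, α₁ ≤ α₂ → Palpha α₂ t x y ≤ Palpha α₁ t x y) ∧
    (∀ α : ℝ, 0 ≤ α →
        heatKernel3 t x y ≤ Palpha α t x y ∧ Palpha α t x y ≤ Palpha 0 t x y) := by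
  have hpi := Real.pi_pos
  have hs : (0:ℝ) ≤ ‖x‖ + ‖y‖ := by positivity
  have hxy : (0:ℝ) < ‖x‖ * ‖y‖ :=
    mul_pos (norm_pos_iff.mpr hx) (norm_pos_iff.mpr hy)
  have hC : (0:ℝ) < (4*π*t) ^ (-(3:ℝ)/2) := Real.rpow_pos_of_pos (by positivity) _
  have hc : (0:ℝ) < 2*t/(‖x‖*‖y‖) := by positivity
  have hPal : ∀ α : ℝ, Palpha α t x y = heatKernel3 t x y +
      (2*t/(‖x‖*‖y‖)) * ((4*π*t) ^ (-(3:ℝ)/2) *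
        ∫ u in Set.Ioi (0:ℝ),
          Real.exp (-((4*π*α)*u)) * ((u+(‖x‖+‖y‖))/(2*t)) *
            Real.exp (-(u+(‖x‖+‖y‖))^2/(4*t))) := by
    intro α
    have hJ : (∫ u in Set.Ioi (0:ℝ),
        Real.exp (-4*π*α*u) * ((4*π*t) ^ (-(3:ℝ)/2) *
          Real.exp (-(u + ‖x‖ + ‖y‖)^2/(4*t)))) =
        (4*π*t) ^ (-(3:ℝ)/2) * ∫ u in Set.Ioi (0:ℝ),
          Real.exp (-((4*π*α)*u)) * Real.exp (-(u+(‖x‖+‖y‖))^2/(4*t)) := by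
      rw [← MeasureTheory.integral_const_mul]
      refine MeasureTheory.integral_congr_ae (Filter.Eventually.of_forall fun u => ?_)
      simp only [show -4*π*α*u = -((4*π*α)*u) from by ring,
        show u + ‖x‖ + ‖y‖ = u + (‖x‖+‖y‖) from by ring]
      ring
    have hibp := Stmt18Aux.ibp ht (‖x‖+‖y‖) (4*π*α)
    unfold Palpha heatRadial
    rw [hJ]
    linear_combination (-(2*t/(‖x‖*‖y‖)) * ((4*π*t) ^ (-(3:ℝ)/2))) * hibp
  have mono : ∀ α₁ α₂ : ℝ, α₁ ≤ α₂ → Palpha α₂ t x y ≤ Palpha α₁ t x y := by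
    intro α₁ α₂ hα
    rw [hPal α₁, hPal α₂]
    have hb : (4*π*α₁) ≤ (4*π*α₂) := by nlinarith
    have hH := Stmt18Aux.H_mono ht hs hb
    exact add_le_add_right
      (mul_le_mul_of_nonneg_left (mul_le_mul_of_nonneg_left hH hC.le) hc.le) _
  refine ⟨mono, fun α hα => ⟨?_, mono 0 α hα⟩⟩
  rw [hPal α]
  have hH := Stmt18Aux.H_nonneg ht hs (4*π*α)
  have h1 := mul_nonneg hC.le hH
  have h2 := mul_nonneg hc.le h1
  linarith
end
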